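/- Let t ≥ 0, let v be a non-root vertex of a perfect binary tree, and let u be a grandchild of v with u ≠ root. If u is weakly t-stable and ξ_t(v) = ξ_t(u), then v is weakly t-stable. -/

import Mathlib

open SimpleGraph Set

variable {V : Type*}

/-- The majority-dynamics process generated by the initial opinion vector `σ`:
`ξ (t+1) v` is the sign of the sum of the opinions `ξ t` over the neighbours of `v`. -/
noncomputable def dyn (G : SimpleGraph V) (σ : V → ℤ) : ℕ → V → ℤ
  | 0 => σ
  | t + 1 => fun v => if 0 < ∑ᶠ u ∈ G.neighborSet v, dyn G σ t u then 1 else -1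

/-- `σ` is a valid vector of opinions, i.e. takes values in `{-1, 1}`. -/
def PM (σ : V → ℤ) : Prop := ∀ v, σ v = 1 ∨ σ v = -1

/-- The degree of a vertex. -/
noncomputable def degree' (G : SimpleGraph V) (v : V) : ℕ := (G.neighborSet v).ncard

/-- A leaf is a vertex of degree 1. -/
def IsLeaf (G : SimpleGraph V) (v : V) : Prop := degree' G v = 1

/-- The number of neighbours of `v` that are leaves. -/
noncomputable def leafNbrs (G : SimpleGraph V) (v : V) : ℕ := {u | G.Adj v u ∧ IsLeaf G u}.ncard

/-- All degrees of `G` are odd. -/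
def OddDegrees (G : SimpleGraph V) : Prop := ∀ v, Odd (degree' G v)

/-- `v` is `t`-stable for the process `ξ`. -/
def Stable (ξ : ℕ → V → ℤ) (v : V) (t : ℕ) : Prop :=
  ∀ s, t ≤ s → s % 2 = t % 2 → ξ (s + 2) v = ξ s v

/-- `G` is a perfect `k`-ary tree of height `h` rooted at `R`. -/
noncomputable def IsPerfectKAry (G : SimpleGraph V) (R : V) (k h : ℕ) : Prop :=
  G.IsTree ∧ (∀ v, degree' G v = 1 ∨ degree' G v = k + 1) ∧
    (∀ v, degree' G v = 1 → G.dist R v = h) ∧ degree' G R = k + 1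

/-- The set of descendants of `v` (including `v`) in the tree rooted at `R`:
those vertices `u` such that `v` lies on the (unique) geodesic from `R` to `u`. -/
noncomputable def desc (G : SimpleGraph V) (R v : V) : Set V :=
  {u | G.dist R u = G.dist R v + G.dist v u}

/-- `p` is the parent of `c` in the tree rooted at `R`. -/
noncomputable def IsParent (G : SimpleGraph V) (R p c : V) : Prop :=
  G.Adj p c ∧ G.dist R p + 1 = G.dist R c

/-- `v` is weakly `t`-stable for the process `ξ` (in the tree rooted at `R`): there is a
vector of initial opinions agreeing with `ξ t` on the subtree of descendants of `v` for
which `v` is 0-stable. -/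
noncomputable def WeaklyStable (G : SimpleGraph V) (R : V) (ξ : ℕ → V → ℤ) (v : V)
    (t : ℕ) : Prop :=
  ∃ σ' : V → ℤ, PM σ' ∧ (∀ w ∈ desc G R v, σ' w = ξ t w) ∧
    ∀ s, s % 2 = 0 → dyn G σ' (s + 2) v = dyn G σ' s v

/-!
Let `c = ξ_t(v) = ξ_t(u)` and let `τ` be `ξ_t` on the subtree of `v` and `c` elsewhere. Outside
the subtree of `v` the opinions under `τ` stay `c` forever. Majority dynamics is monotone, so on
the subtree of `u`, at the space-time points of the parity of `u` at even times, `τ` is `c`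
wherever the witness `σ'` of the weak stability of `u` is, provided the parent `w` of `u` is `c`
at odd times. Since `σ'` keeps `u` at `c` at even times, an induction over even times shows that
`u` and `v` are `c` under `τ`, hence `w` (two of three neighbours) at the next odd time, hence `v`
(neighbours `w` and its parent) at the next even time.
-/

section Tree

variable {G : SimpleGraph V} {R x y z : V}

lemma mem_desc : z ∈ desc G R x ↔ G.dist R z = G.dist R x + G.dist x z :=
  Iff.rfl

lemma self_mem_desc (x : V) : x ∈ desc G R x := by
  simp [mem_desc]

lemma exists_isParent (hG : G.Connected) (hx : x ≠ R) : ∃ y, IsParent G R y x := by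
  obtain ⟨p, hp⟩ := hG.exists_walk_length_eq_dist R x
  have hnil : ¬p.Nil := fun h => hx h.eq.symm
  have hadj := p.adj_penultimate hnil
  refine ⟨p.penultimate, hadj, ?_⟩
  have := dist_le p.dropLast
  have := p.length_dropLast_add_one hnil
  have := hadj.diff_dist_adj (u := R)
  omega

lemma IsParent.unique (hT : G.IsTree) {y₁ y₂ : V} (h₁ : IsParent G R y₁ x)
    (h₂ : IsParent G R y₂ x) : y₁ = y₂ := by
  have shortest_concat : ∀ {y} (h : IsParent G R y x), ∃ p : G.Walk R y,
      (p.concat h.1).IsPath := fun {y} h => by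
    obtain ⟨p, hp⟩ := hT.connected.exists_walk_length_eq_dist R y
    exact ⟨p, (p.concat h.1).isPath_of_length_eq_dist (by rw [Walk.length_concat, hp, h.2])⟩
  obtain ⟨p₁, hp₁⟩ := shortest_concat h₁
  obtain ⟨p₂, hp₂⟩ := shortest_concat h₂
  have := (hT.isAcyclic.subsingleton_path R x).elim ⟨_, hp₁⟩ ⟨_, hp₂⟩
  exact (Walk.concat_inj (Subtype.mk.inj this)).1

lemma isParent_or_isParent_of_adj (hT : G.IsTree) (h : G.Adj y z) :
    IsParent G R y z ∨ IsParent G R z y := by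
  rcases hT.dist_eq_dist_add_one_of_adj R h with h' | h'
  · exact .inr ⟨h.symm, h'.symm⟩
  · exact .inl ⟨h, h'.symm⟩

lemma IsParent.notMem_desc (h : IsParent G R y x) : y ∉ desc G R x := by
  have := h.2
  simp only [mem_desc]
  omega

lemma mem_desc_of_isParent (hG : G.Connected) (hz : z ∈ desc G R x)
    (h : IsParent G R z y) : y ∈ desc G R x := by
  simp only [mem_desc] at hz ⊢
  have := h.2
  have := h.1.diff_dist_adj (u := x)
  have := hG.dist_triangle (u := R) (v := x) (w := y)
  omega

lemma desc_subset_desc (hG : G.Connected) (hy : y ∈ desc G R x) : desc G R y ⊆ desc G R x := by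
  intro z hz
  simp only [mem_desc] at hy hz ⊢
  have := hG.dist_triangle (u := x) (v := y) (w := z)
  have := hG.dist_triangle (u := R) (v := x) (w := z)
  omega

lemma eq_and_isParent_of_adj (hT : G.IsTree) (hz : z ∈ desc G R x) (hy : y ∉ desc G R x)
    (hadj : G.Adj y z) : z = x ∧ IsParent G R y x := by
  rcases isParent_or_isParent_of_adj (R := R) hT hadj with hyz | hzy
  · obtain rfl : z = x := by
      by_contra hne
      -- the vertex before `z` on the geodesic from `x` is a parent of `z` inside the subtree
      obtain ⟨y', hy'⟩ := exists_isParent (R := x) hT.connected hne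
      have := hy'.2
      have := hT.connected.dist_triangle (u := R) (v := x) (w := y')
      have := hy'.1.diff_dist_adj (u := R)
      simp only [mem_desc] at hz hy
      obtain rfl : y' = y := IsParent.unique hT ⟨hy'.1, by omega⟩ hyz
      exact hy (by omega)
    exact ⟨rfl, hyz⟩
  · exact absurd (mem_desc_of_isParent hT.connected hz hzy) hy

end Tree

section PerfectTree

variable {G : SimpleGraph V} {R y : V} {k h : ℕ}

lemma IsPerfectKAry.ncard_neighborSet_ne_zero (hperf : IsPerfectKAry G R k h) (x : V) :
    (G.neighborSet x).ncard ≠ 0 := by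
  have := hperf.2.1 x
  simp only [degree'] at this
  omega

lemma IsPerfectKAry.ncard_neighborSet_of_isParent (hperf : IsPerfectKAry G R k h)
    (hyx : IsParent G R y x) : (G.neighborSet y).ncard = k + 1 := by
  rcases eq_or_ne y R with rfl | hyR
  · exact hperf.2.2.2
  obtain ⟨q, hq⟩ := exists_isParent hperf.1.connected hyR
  have hqx : q ≠ x := by
    rintro rfl
    have := hq.2
    have := hyx.2
    omega
  have : 2 ≤ (G.neighborSet y).ncard := by
    rw [← ncard_pair hqx]
    exact ncard_le_ncard (insert_subset hq.1.symm (singleton_subset_iff.2 hyx.1))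
      (finite_of_ncard_ne_zero (hperf.ncard_neighborSet_ne_zero y))
  have := hperf.2.1 y
  simp only [degree'] at this
  omega

end PerfectTree

section Dynamics

variable {G : SimpleGraph V} {σ τ : V → ℤ} {c : ℤ} {s : ℕ} {x a b : V}

lemma dyn_succ (σ : V → ℤ) (s : ℕ) (x : V) :
    dyn G σ (s + 1) x = if 0 < ∑ᶠ z ∈ G.neighborSet x, dyn G σ s z then 1 else -1 :=
  rfl

lemma pm_dyn (G : SimpleGraph V) (hσ : PM σ) : ∀ s, PM (dyn G σ s)
  | 0 => hσ
  | s + 1 => fun x => by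
    rw [dyn_succ]
    split_ifs <;> simp

lemma ite_pos_eq_of_one_le_mul {S : ℤ} (hc : c = 1 ∨ c = -1) (h : 1 ≤ c * S) :
    (if 0 < S then 1 else -1 : ℤ) = c := by
  rcases hc with rfl | rfl <;> split_ifs <;> omega

lemma dyn_succ_eq_of_forall_nbr (hc : c = 1 ∨ c = -1) (hx : (G.neighborSet x).ncard ≠ 0)
    (h : ∀ z ∈ G.neighborSet x, dyn G σ s z = c) : dyn G σ (s + 1) x = c := by
  have hfin := finite_of_ncard_ne_zero hx
  rw [dyn_succ, finsum_mem_congr rfl h, finsum_mem_eq_finite_toFinset_sum _ hfin,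
    Finset.sum_const, ← ncard_eq_toFinset_card _ hfin, nsmul_eq_mul]
  apply ite_pos_eq_of_one_le_mul hc
  rcases hc with rfl | rfl <;> omega

lemma dyn_succ_eq_of_two_nbrs (hc : c = 1 ∨ c = -1) (hσ : PM σ)
    (hx : (G.neighborSet x).ncard = 3) (ha : G.Adj x a) (hb : G.Adj x b) (hab : a ≠ b)
    (hsa : dyn G σ s a = c) (hsb : dyn G σ s b = c) : dyn G σ (s + 1) x = c := by
  have hfin := finite_of_ncard_ne_zero (by omega : (G.neighborSet x).ncard ≠ 0)
  have hsub : ({a, b} : Set V) ⊆ G.neighborSet x := insert_subset ha (singleton_subset_iff.2 hb)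
  obtain ⟨d, hd⟩ : ∃ d, G.neighborSet x \ {a, b} = {d} :=
    ncard_eq_one.1 (by rw [ncard_sdiff hsub, hx, ncard_pair hab])
  rw [dyn_succ, ← finsum_mem_add_sdiff hsub hfin, finsum_mem_pair hab, hd, finsum_mem_singleton,
    hsa, hsb]
  apply ite_pos_eq_of_one_le_mul hc
  rcases hc with rfl | rfl <;> rcases pm_dyn G hσ s d with h | h <;> rw [h] <;> norm_num

lemma dyn_succ_eq_of_nbr_imp (hc : c = 1 ∨ c = -1) (hσ : PM σ) (hτ : PM τ)
    (hx : (G.neighborSet x).Finite)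
    (h : ∀ z ∈ G.neighborSet x, dyn G σ s z = c → dyn G τ s z = c)
    (hσx : dyn G σ (s + 1) x = c) : dyn G τ (s + 1) x = c := by
  have hsum : c * ∑ᶠ z ∈ G.neighborSet x, dyn G σ s z ≤
      c * ∑ᶠ z ∈ G.neighborSet x, dyn G τ s z := by
    rw [mul_finsum_mem, mul_finsum_mem, finsum_mem_eq_finite_toFinset_sum _ hx,
      finsum_mem_eq_finite_toFinset_sum _ hx]
    refine Finset.sum_le_sum fun z hz => ?_
    have := h z (hx.mem_toFinset.1 hz)
    rcases hc with rfl | rfl <;> rcases pm_dyn G hσ s z with h₁ | h₁ <;>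
      rcases pm_dyn G hτ s z with h₂ | h₂ <;> simp_all
  rw [dyn_succ] at hσx ⊢
  rcases hc with rfl | rfl <;> split_ifs at hσx ⊢ <;> omega

lemma dyn_two_mul_eq_of_stable (h : ∀ s, s % 2 = 0 → dyn G σ (s + 2) x = dyn G σ s x) :
    ∀ k, dyn G σ (2 * k) x = σ x
  | 0 => rfl
  | k + 1 => (h (2 * k) (by omega)).trans (dyn_two_mul_eq_of_stable h k)

end Dynamics

section Subtree

variable {G : SimpleGraph V} {R : V} {h : ℕ} {σ τ : V → ℤ} {c : ℤ} {s : ℕ} {p v w u : V}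

/-- A vertex outside the subtree has at most one neighbour inside it, and then two outside it. -/
lemma dyn_eq_of_notMem_desc (hperf : IsPerfectKAry G R 2 h) (hc : c = 1 ∨ c = -1)
    (hτ : PM τ) (hout : ∀ y ∉ desc G R v, τ y = c) : ∀ s, ∀ y ∉ desc G R v, dyn G τ s y = c
  | 0 => hout
  | s + 1 => fun y hy => by
    have ih := dyn_eq_of_notMem_desc hperf hc hτ hout s
    by_cases hyv : IsParent G R y v
    · obtain ⟨a, b, hab, hN⟩ := ncard_eq_two.1 (by
        rw [ncard_sdiff_singleton_of_mem (show v ∈ G.neighborSet y from hyv.1),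
          hperf.ncard_neighborSet_of_isParent hyv] : (G.neighborSet y \ {v}).ncard = 2)
      have ha : a ∈ G.neighborSet y \ {v} := hN ▸ mem_insert a _
      have hb : b ∈ G.neighborSet y \ {v} := hN ▸ mem_insert_of_mem a rfl
      have out : ∀ z ∈ G.neighborSet y \ {v}, z ∉ desc G R v :=
        fun z hz hzv => hz.2 (eq_and_isParent_of_adj hperf.1 hzv hy hz.1).1
      exact dyn_succ_eq_of_two_nbrs hc hτ (hperf.ncard_neighborSet_of_isParent hyv) ha.1 hb.1
        hab (ih a (out a ha)) (ih b (out b hb))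
    · exact dyn_succ_eq_of_forall_nbr hc (hperf.ncard_neighborSet_ne_zero y) fun z hz =>
        ih z fun hzv => hyv (eq_and_isParent_of_adj hperf.1 hzv hy hz).2

/-- The space-time points of this parity class only see points of the same class, except that
`u` sees its parent at odd times. -/
def SubtreeDominates (G : SimpleGraph V) (R : V) (c : ℤ) (σ τ : V → ℤ) (u : V) (s : ℕ) :
    Prop :=
  ∀ x ∈ desc G R u, (G.dist R x + s) % 2 = G.dist R u % 2 → dyn G σ s x = c → dyn G τ s x = c

lemma SubtreeDominates.succ (hperf : IsPerfectKAry G R 2 h) (hc : c = 1 ∨ c = -1)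
    (hσ : PM σ) (hτ : PM τ) (hwu : IsParent G R w u) (hD : SubtreeDominates G R c σ τ u s)
    (hw : s % 2 = 1 → dyn G τ s w = c) : SubtreeDominates G R c σ τ u (s + 1) := by
  intro x hx hpar
  refine dyn_succ_eq_of_nbr_imp hc hσ hτ
    (finite_of_ncard_ne_zero (hperf.ncard_neighborSet_ne_zero x)) fun z hz => ?_
  by_cases hzu : z ∈ desc G R u
  · obtain h' | h' := isParent_or_isParent_of_adj (R := R) hperf.1 hz <;>
      exact hD z hzu (by have := h'.2; omega)
  · obtain ⟨rfl, hzx⟩ := eq_and_isParent_of_adj hperf.1 hx hzu hz.symm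
    obtain rfl := hzx.unique hperf.1 hwu
    exact fun _ => hw (by omega)

lemma dyn_two_mul_eq_of_grandchild (hperf : IsPerfectKAry G R 2 h) (hc : c = 1 ∨ c = -1)
    (hσ : PM σ) (hτ : PM τ) (hpv : IsParent G R p v) (hvw : IsParent G R v w)
    (hwu : IsParent G R w u) (hp : ∀ s, dyn G τ s p = c) (hv : τ v = c)
    (hu : ∀ k, dyn G σ (2 * k) u = c) (hστ : ∀ x ∈ desc G R u, σ x = τ x) :
    ∀ k, dyn G τ (2 * k) v = c := by
  suffices ∀ k, SubtreeDominates G R c σ τ u (2 * k) ∧ dyn G τ (2 * k) v = c from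
    fun k => (this k).2
  intro k
  induction k with
  | zero => exact ⟨fun x hx _ hσx => (hστ x hx).symm.trans hσx, hv⟩
  | succ k ih =>
    obtain ⟨hD, hvk⟩ := ih
    have huk : dyn G τ (2 * k) u = c := hD u (self_mem_desc u) (by omega) (hu k)
    have hvu : v ≠ u := by
      rintro rfl
      have := hvw.2
      have := hwu.2
      omega
    have hwk : dyn G τ (2 * k + 1) w = c :=
      dyn_succ_eq_of_two_nbrs hc hτ (hperf.ncard_neighborSet_of_isParent hwu) hvw.1.symm hwu.1
        hvu hvk huk
    have hpw : p ≠ w := by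
      rintro rfl
      have := hpv.2
      have := hvw.2
      omega
    have hD' := (hD.succ hperf hc hσ hτ hwu fun hodd => by omega).succ hperf hc hσ hτ hwu
      fun _ => hwk
    exact ⟨hD', dyn_succ_eq_of_two_nbrs hc hτ (hperf.ncard_neighborSet_of_isParent hvw)
      hpv.1.symm hvw.1 hpw (hp _) hwk⟩

end Subtree

theorem weak_grandparent_general (G : SimpleGraph V) (R : V) (h : ℕ)
    (hperf : IsPerfectKAry G R 2 h) (v w u : V) (hv : v ≠ R)
    (h1 : IsParent G R v w) (h2 : IsParent G R w u)
    (σ : V → ℤ) (hσ : PM σ) (t : ℕ)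
    (hws : WeaklyStable G R (dyn G σ) u t)
    (hop : dyn G σ t v = dyn G σ t u) :
    WeaklyStable G R (dyn G σ) v t := by
  classical
  obtain ⟨σ', hσ', hσ'_eq, hstable⟩ := hws
  obtain ⟨p, hp⟩ := exists_isParent hperf.1.connected hv
  set c := dyn G σ t v
  have hc : c = 1 ∨ c = -1 := pm_dyn G hσ t v
  set τ := (desc G R v).piecewise (dyn G σ t) fun _ => c
  have hτ : PM τ := fun x => by
    by_cases hx : x ∈ desc G R v <;> simp [τ, hx, pm_dyn G hσ t x, hc]
  have hdesc : desc G R u ⊆ desc G R v := desc_subset_desc hperf.1.connected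
    (mem_desc_of_isParent hperf.1.connected (mem_desc_of_isParent hperf.1.connected
      (self_mem_desc v) h1) h2)
  have hv_even := dyn_two_mul_eq_of_grandchild hperf hc hσ' hτ hp h1 h2
    (fun s => dyn_eq_of_notMem_desc hperf hc hτ (fun y hy => piecewise_eq_of_notMem _ _ _ hy) s p
      hp.notMem_desc)
    (piecewise_eq_of_mem _ _ _ (self_mem_desc v))
    (fun k => by rw [dyn_two_mul_eq_of_stable hstable, hσ'_eq u (self_mem_desc u), hop])
    (fun x hx => (hσ'_eq x hx).trans (piecewise_eq_of_mem _ _ _ (hdesc hx)).symm)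
  refine ⟨τ, hτ, fun x hx => piecewise_eq_of_mem _ _ _ hx, fun s hs => ?_⟩
  obtain ⟨k, rfl⟩ : ∃ k, s = 2 * k := ⟨s / 2, by omega⟩
  exact (hv_even (k + 1)).trans (hv_even k).symm

/-- If `u` is a non-root grandchild of a non-root vertex `v` of a perfect
binary tree, `u` is weakly `t`-stable and `ξ_t(v) = ξ_t(u)`, then `v` is weakly
`t`-stable. -/
theorem weak_grandparent [Fintype V] (G : SimpleGraph V) (R : V) (h : ℕ) (hh : 1 ≤ h)
    (hperf : IsPerfectKAry G R 2 h) (v w u : V) (hv : v ≠ R) (hu : u ≠ R)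
    (h1 : IsParent G R v w) (h2 : IsParent G R w u)
    (σ : V → ℤ) (hσ : PM σ) (t : ℕ)
    (hws : WeaklyStable G R (dyn G σ) u t)
    (hop : dyn G σ t v = dyn G σ t u) :
    WeaklyStable G R (dyn G σ) v t :=
  weak_grandparent_general G R h hperf v w u hv h1 h2 σ hσ t hws hop
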